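/- Let A be a k-algebra that is finitely generated projective over k, and P an invertible k-module. Then the following are equivalent: (1) A is a P-Frobenius algebra (A ≅ Hom_k(A,P) as right A-modules); (2) A ≅ Hom_k(A,P) as left A-modules; (3) there exist φ ∈ Hom_k(A,P), elements x₁,…,xₙ, y₁,…,yₙ ∈ A and q₁,…,qₙ ∈ Q = P* such that Σᵢ φ(a xᵢ) qᵢ yᵢ = a for all a ∈ A, where φ(axᵢ)qᵢ ∈ k via the canonical pairing P ⊗ Q → k. -/

import Mathlib

open scoped TensorProduct

def IsInvertibleModule (k P : Type*) [CommRing k] [AddCommGroup P] [Module k P] : Prop :=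
  Module.Finite k P ∧ Module.Projective k P ∧ Function.Bijective (contractRight k P)

/-!
View `A →ₗ Hom(A, P)` as bilinear forms `B(a, z)`. If `B` admits dual bases,
`∑ qᵢ (B(a, xᵢ)) • yᵢ = a`, then `B` has a left inverse `Ψ`, and the transposed form is surjective
because `q(x) • p = q(p) • x` in an invertible module. As `A` is finitely generated, the surjective
endomorphism `Ψ ∘ Bᵀ` of `A` is injective (Orzech), which makes both `B` and `Bᵀ` bijective.
Conversely, when `A` and `P` are finite projective every linear map `Hom(A, P) → A` has the shape
`g ↦ ∑ qᵢ (g xᵢ) • yᵢ`, so the inverse of a bijective `B` provides dual bases. Applied to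
`B(a, z) = φ(a z)`, whose bijectivity is (1) and whose transpose's bijectivity is (2), this is
the theorem.
-/

open Module Function

theorem Module.Invertible.dual_apply_smul_comm {k P : Type*} [CommRing k] [AddCommGroup P]
    [Module k P] [Module.Invertible k P] (q : Dual k P) (x p : P) : q x • p = q p • x := by
  simpa using congr(TensorProduct.rid k P (q.lTensor P $(tmul_comm (m₁ := p) (m₂ := x))))

theorem IsInvertibleModule.invertible {k P : Type*} [CommRing k] [AddCommGroup P] [Module k P]
    (hP : IsInvertibleModule k P) : Module.Invertible k P :=
  .left (.ofBijective _ hP.2.2)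

theorem Module.Finite.exists_dual_basis (R M : Type*) [Semiring R] [AddCommMonoid M] [Module R M]
    [Module.Finite R M] [Projective R M] :
    ∃ (n : ℕ) (f : Fin n → Dual R M) (y : Fin n → M), ∀ v, ∑ i, f i v • y i = v := by
  obtain ⟨n, s, t, -, -, hst⟩ := exists_comp_eq_id_of_projective R M
  refine ⟨n, fun i => LinearMap.proj i ∘ₗ t, fun i => s (Pi.single i 1), fun v => ?_⟩
  conv_rhs => rw [← LinearMap.id_apply (R := R) v, ← hst, LinearMap.comp_apply,
    ← Finset.univ_sum_single (t v), map_sum]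
  refine Finset.sum_congr rfl fun i _ => ?_
  rw [LinearMap.comp_apply, LinearMap.proj_apply, ← map_smul, ← Pi.single_smul', smul_eq_mul,
    mul_one]

section DualBases

variable {k M N P : Type*} [CommRing k] [AddCommGroup M] [Module k M] [AddCommGroup N]
  [Module k N] [AddCommGroup P] [Module k P]

theorem LinearMap.exists_eq_sum_dual_apply_smul [Module.Finite k N] [Projective k N]
    [Module.Finite k P] [Projective k P] (Ψ : (N →ₗ[k] P) →ₗ[k] M) :
    ∃ (n : ℕ) (x : Fin n → N) (y : Fin n → M) (q : Fin n → Dual k P),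
      ∀ g, Ψ g = ∑ i, q i (g (x i)) • y i := by
  obtain ⟨a, f, x, hfx⟩ := Module.Finite.exists_dual_basis k N
  obtain ⟨b, q, p, hqp⟩ := Module.Finite.exists_dual_basis k P
  have expand (g : N →ₗ[k] P) :
      g = ∑ st : Fin a × Fin b, q st.2 (g (x st.1)) • (f st.1).smulRight (p st.2) := by
    ext v
    conv_lhs => rw [← hfx v, map_sum]
    simp only [Fintype.sum_prod_type, LinearMap.sum_apply, map_smul, LinearMap.smul_apply,
      LinearMap.smulRight_apply]
    refine Finset.sum_congr rfl fun s _ => ?_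
    conv_lhs => rw [← hqp (g (x s)), Finset.smul_sum]
    simp only [smul_comm (f s v)]
  let e := (finProdFinEquiv (m := a) (n := b)).symm
  refine ⟨a * b, fun i => x (e i).1, fun i => Ψ ((f (e i).1).smulRight (p (e i).2)),
    fun i => q (e i).2, fun g => ?_⟩
  conv_lhs => rw [expand g, map_sum]
  simp_rw [map_smul]
  exact (Fintype.sum_equiv e _ _ fun _ => rfl).symm

def HasDualBases (B : M →ₗ[k] N →ₗ[k] P) : Prop :=
  ∃ (n : ℕ) (x : Fin n → N) (y : Fin n → M) (q : Fin n → Dual k P),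
    ∀ a, ∑ i, q i (B a (x i)) • y i = a

variable {B : M →ₗ[k] N →ₗ[k] P}

theorem hasDualBases_of_leftInverse [Module.Finite k N] [Projective k N] [Module.Finite k P]
    [Projective k P] {Ψ : (N →ₗ[k] P) →ₗ[k] M} (hΨ : LeftInverse Ψ B) : HasDualBases B := by
  obtain ⟨n, x, y, q, hΨ_eq⟩ := Ψ.exists_eq_sum_dual_apply_smul
  exact ⟨n, x, y, q, fun a => (hΨ_eq (B a)).symm.trans (hΨ a)⟩

namespace HasDualBases

theorem exists_leftInverse (h : HasDualBases B) :
    ∃ Ψ : (N →ₗ[k] P) →ₗ[k] M, LeftInverse Ψ B := by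
  obtain ⟨n, x, y, q, h⟩ := h
  refine ⟨∑ i, LinearMap.toSpanSingleton k M (y i) ∘ₗ q i ∘ₗ LinearMap.applyₗ (x i), fun a => ?_⟩
  simpa using h a

theorem flip_surjective [Module.Invertible k P] (h : HasDualBases B) : Surjective B.flip := by
  obtain ⟨n, x, y, q, h⟩ := h
  intro g
  refine ⟨∑ i, q i (g (y i)) • x i, LinearMap.ext fun a => ?_⟩
  symm
  calc g a = g (∑ i, q i (B a (x i)) • y i) := by rw [h a]
    _ = ∑ i, q i (B a (x i)) • g (y i) := by simp only [map_sum, map_smul]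
    _ = ∑ i, q i (g (y i)) • B a (x i) :=
        Finset.sum_congr rfl fun i _ => Module.Invertible.dual_apply_smul_comm ..
    _ = B.flip (∑ i, q i (g (y i)) • x i) a := by simp [map_sum, map_smul]

theorem bijective [Module.Invertible k P] [Module.Finite k M] {B : M →ₗ[k] M →ₗ[k] P}
    (h : HasDualBases B) : Bijective B ∧ Bijective B.flip := by
  obtain ⟨Ψ, hΨ⟩ := h.exists_leftInverse
  have hflip := h.flip_surjective
  have hcomp : Injective (Ψ ∘ B.flip) :=
    OrzechProperty.injective_of_surjective_endomorphism (Ψ ∘ₗ B.flip) (hΨ.surjective.comp hflip)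
  have hΨ_inj : Injective Ψ := hcomp.of_comp_right hflip
  exact ⟨⟨hΨ.injective, (hΨ.rightInverse_of_injective hΨ_inj).surjective⟩, ⟨hcomp.of_comp, hflip⟩⟩

end HasDualBases

section Square

variable [Module.Invertible k P] [Module.Finite k M] [Projective k M] {B : M →ₗ[k] M →ₗ[k] P}

theorem hasDualBases_iff_bijective : HasDualBases B ↔ Bijective B :=
  ⟨fun h => h.bijective.1, fun hB =>
    hasDualBases_of_leftInverse (Ψ := (LinearEquiv.ofBijective B hB).symm.toLinearMap)
      (LinearEquiv.ofBijective B hB).symm_apply_apply⟩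

theorem bijective_flip_iff_bijective : Bijective B.flip ↔ Bijective B :=
  ⟨fun h => B.flip_flip ▸ (hasDualBases_iff_bijective.2 h).bijective.2,
    fun h => (hasDualBases_iff_bijective.2 h).bijective.2⟩

end Square

end DualBases

section Frobenius

variable {k A P : Type*} [CommRing k] [Ring A] [Algebra k A] [AddCommGroup P] [Module k P]

theorem exists_rightLinear_equiv_iff :
    (∃ Φ : A ≃ₗ[k] (A →ₗ[k] P), ∀ a x z : A, Φ (x * a) z = Φ x (a * z)) ↔
      ∃ φ : A →ₗ[k] P, Bijective ((LinearMap.mul k A).compr₂ φ) := by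
  refine ⟨fun ⟨Φ, hΦ⟩ => ⟨Φ 1, ?_⟩, fun ⟨φ, hφ⟩ => ⟨.ofBijective _ hφ, fun a x z => ?_⟩⟩
  · convert Φ.bijective
    ext x z
    simpa using (hΦ x 1 z).symm
  · simp [mul_assoc]

theorem exists_leftLinear_equiv_iff :
    (∃ Φ : A ≃ₗ[k] (A →ₗ[k] P), ∀ a x z : A, Φ (a * x) z = Φ x (z * a)) ↔
      ∃ φ : A →ₗ[k] P, Bijective ((LinearMap.mul k A).compr₂ φ).flip := by
  refine ⟨fun ⟨Φ, hΦ⟩ => ⟨Φ 1, ?_⟩, fun ⟨φ, hφ⟩ => ⟨.ofBijective _ hφ, fun a x z => ?_⟩⟩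
  · convert Φ.bijective
    ext x z
    simpa using (hΦ x 1 z).symm
  · simp [mul_assoc]

end Frobenius

theorem pFrobenius_characterizations (k A P : Type*) [CommRing k] [AddCommGroup P] [Module k P]
    [Ring A] [Algebra k A] (hP : IsInvertibleModule k P)
    (hfin : Module.Finite k A) (hproj : Module.Projective k A) :
    ((∃ Φ : A ≃ₗ[k] (A →ₗ[k] P), ∀ a x z : A, Φ (x * a) z = Φ x (a * z)) ↔
      (∃ Φ : A ≃ₗ[k] (A →ₗ[k] P), ∀ a x z : A, Φ (a * x) z = Φ x (z * a))) ∧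
    ((∃ Φ : A ≃ₗ[k] (A →ₗ[k] P), ∀ a x z : A, Φ (x * a) z = Φ x (a * z)) ↔
      (∃ (n : ℕ) (φ : A →ₗ[k] P) (x y : Fin n → A) (q : Fin n → Module.Dual k P),
        ∀ a : A, ∑ i, q i (φ (a * x i)) • y i = a)) := by
  have := hP.invertible
  rw [exists_rightLinear_equiv_iff, exists_leftLinear_equiv_iff, exists_comm]
  refine ⟨exists_congr fun φ => bijective_flip_iff_bijective.symm,
    exists_congr fun φ => hasDualBases_iff_bijective.symm⟩
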